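/- Let (A_Q) be positive semidefinite d×d matrices indexed by dyadic subcubes Q of Q₀ satisfying (1/|K|) Σ_{Q ⊆ K} A_Q ≤ C·1 for all dyadic K. Then for all f ∈ L²(Q₀; ℂ^d): Σ_Q ⟨A_Q ⟨f⟩_Q, ⟨f⟩_Q⟩ ≤ C' d ‖f‖²_{L²}. -/

import Mathlib

open Matrix
open scoped ComplexOrder

/-- Vector average `⟨f⟩_Q` over the dyadic cube of generation `n`, index `k`, of a
vector-valued function constant on the `2^N` leaves of the dyadic tree of depth `N`. -/
noncomputable def vecAvg {d : ℕ} (N : ℕ) (f : ℕ → Fin d → ℂ) (n k : ℕ) :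
    Fin d → ℂ :=
  (((2 : ℝ) ^ (N - n))⁻¹ : ℝ) • ∑ l ∈ Finset.range (2 ^ (N - n)), f (k * 2 ^ (N - n) + l)

section ScalarCarleson

open Finset

/-- Sum of `p` over the leaves of the dyadic cube `(n,k)`. -/
def leafSum (N : ℕ) (p : ℕ → ℝ) (n k : ℕ) : ℝ :=
  ∑ l ∈ Finset.range (2 ^ (N - n)), p (k * 2 ^ (N - n) + l)

/-- Average of `p` over the dyadic cube `(n,k)`. -/
noncomputable def avg2 (N : ℕ) (p : ℕ → ℝ) (n k : ℕ) : ℝ :=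
  ((2 : ℝ) ^ (N - n))⁻¹ * leafSum N p n k

/-- Sum of `h` over all dyadic subcubes of the cube `(n,k)`. -/
def cubeSum (N : ℕ) (h : ℕ → ℕ → ℝ) (n k : ℕ) : ℝ :=
  ∑ m ∈ Finset.Icc n N, ∑ l ∈ Finset.range (2 ^ (m - n)), h m (k * 2 ^ (m - n) + l)

lemma leafSum_split (N : ℕ) (p : ℕ → ℝ) (n k : ℕ) (h : n < N) :
    leafSum N p n k = leafSum N p (n + 1) (2 * k) + leafSum N p (n + 1) (2 * k + 1) := by
  have h1 : N - n = (N - (n + 1)) + 1 := by omega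
  unfold leafSum
  rw [h1, pow_succ, mul_two, Finset.sum_range_add]
  congr 1
  · exact Finset.sum_congr rfl fun l _ => by congr 1; ring
  · exact Finset.sum_congr rfl fun l _ => by congr 1; ring

lemma avg2_split (N : ℕ) (p : ℕ → ℝ) (n k : ℕ) (h : n < N) :
    avg2 N p n k = (avg2 N p (n + 1) (2 * k) + avg2 N p (n + 1) (2 * k + 1)) / 2 := by
  have h1 : N - n = (N - (n + 1)) + 1 := by omega
  unfold avg2
  rw [leafSum_split N p n k h, h1, pow_succ]
  have : ((2:ℝ) ^ (N - (n+1))) ≠ 0 := by positivity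
  field_simp

lemma cubeSum_split (N : ℕ) (h : ℕ → ℕ → ℝ) (n k : ℕ) (hn : n < N) :
    cubeSum N h n k
      = h n k + cubeSum N h (n + 1) (2 * k) + cubeSum N h (n + 1) (2 * k + 1) := by
  unfold cubeSum
  have hins : Finset.Icc n N = insert n (Finset.Icc (n + 1) N) := by
    rw [Finset.Icc_add_one_left_eq_Ioc]; exact (Finset.Ioc_insert_left hn.le).symm
  rw [hins, Finset.sum_insert (by simp)]
  have h0 : ∑ l ∈ Finset.range (2 ^ (n - n)), h n (k * 2 ^ (n - n) + l) = h n k := by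
    simp [Nat.sub_self]
  have hrest : ∑ m ∈ Finset.Icc (n + 1) N, ∑ l ∈ Finset.range (2 ^ (m - n)),
        h m (k * 2 ^ (m - n) + l)
      = (∑ m ∈ Finset.Icc (n + 1) N, ∑ l ∈ Finset.range (2 ^ (m - (n + 1))),
          h m (2 * k * 2 ^ (m - (n + 1)) + l))
        + ∑ m ∈ Finset.Icc (n + 1) N, ∑ l ∈ Finset.range (2 ^ (m - (n + 1))),
          h m ((2 * k + 1) * 2 ^ (m - (n + 1)) + l) := by
    rw [← Finset.sum_add_distrib]
    refine Finset.sum_congr rfl fun m hm => ?_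
    have hm' : n + 1 ≤ m := (Finset.mem_Icc.mp hm).1
    have h1 : m - n = (m - (n + 1)) + 1 := by omega
    rw [h1, pow_succ, mul_two, Finset.sum_range_add]
    congr 1
    · exact Finset.sum_congr rfl fun l _ => by congr 1; ring
    · exact Finset.sum_congr rfl fun l _ => by congr 1; ring
  rw [h0, hrest]
  ring

lemma cubeSum_nonneg (N : ℕ) (h : ℕ → ℕ → ℝ) (hh : ∀ m j, 0 ≤ h m j) (n k : ℕ) :
    0 ≤ cubeSum N h n k :=
  Finset.sum_nonneg fun _ _ => Finset.sum_nonneg fun _ _ => hh _ _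

/-- The key Bellman-function inequality. -/
lemma bellman_key (f1 f2 M1 M2 a : ℝ) (h1 : 0 ≤ M1) (h2 : 0 ≤ M2) (ha : 0 ≤ a)
    (hM : (M1 + M2) / 2 + a ≤ 1) :
    4 * (((f1 + f2) / 2) ^ 2 / (1 + ((M1 + M2) / 2 + a))) + a * ((f1 + f2) / 2) ^ 2
      ≤ 2 * (f1 ^ 2 / (1 + M1)) + 2 * (f2 ^ 2 / (1 + M2)) := by
  set u := 1 + M1 with hu_def
  set v := 1 + M2 with hv_def
  set s := 1 + ((M1 + M2) / 2 + a) with hs_def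
  have hu : 0 < u := by positivity
  have hv : 0 < v := by positivity
  have hs : 0 < s := by positivity
  have hs2 : s ≤ 2 := by simp only [hs_def]; linarith
  have huv : u + v = 2 * s - 2 * a := by simp only [hu_def, hv_def, hs_def]; ring
  have hA : (f1 + f2) ^ 2 * (u * v) ≤ (u + v) * (f1 ^ 2 * v + f2 ^ 2 * u) := by
    nlinarith [sq_nonneg (f1 * v - f2 * u)]
  have hB : (4 + a * s) * (u + v) ≤ 8 * s := by
    rw [huv]
    nlinarith [mul_nonneg ha (mul_nonneg hs.le hs.le), mul_nonneg (mul_nonneg ha ha) hs.le,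
      mul_nonneg ha hs.le]
  have h4as : 0 ≤ 4 + a * s := by positivity
  have hQ : 0 ≤ f1 ^ 2 * v + f2 ^ 2 * u := by positivity
  have hC : (4 + a * s) * ((f1 + f2) ^ 2 * (u * v))
      ≤ (4 + a * s) * ((u + v) * (f1 ^ 2 * v + f2 ^ 2 * u)) :=
    mul_le_mul_of_nonneg_left hA h4as
  have hD : (4 + a * s) * ((u + v) * (f1 ^ 2 * v + f2 ^ 2 * u))
      ≤ 8 * s * (f1 ^ 2 * v + f2 ^ 2 * u) := by
    calc (4 + a * s) * ((u + v) * (f1 ^ 2 * v + f2 ^ 2 * u))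
        = ((4 + a * s) * (u + v)) * (f1 ^ 2 * v + f2 ^ 2 * u) := by ring
      _ ≤ 8 * s * (f1 ^ 2 * v + f2 ^ 2 * u) := mul_le_mul_of_nonneg_right hB hQ
  have key : (4 + a * s) * ((f1 + f2) / 2) ^ 2 * (u * v)
      ≤ 2 * (f1 ^ 2 * v + f2 ^ 2 * u) * s := by
    calc (4 + a * s) * ((f1 + f2) / 2) ^ 2 * (u * v)
        = (4 + a * s) * ((f1 + f2) ^ 2 * (u * v)) / 4 := by ring
      _ ≤ (4 + a * s) * ((u + v) * (f1 ^ 2 * v + f2 ^ 2 * u)) / 4 := by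
          gcongr ?_ / 4
      _ ≤ 8 * s * (f1 ^ 2 * v + f2 ^ 2 * u) / 4 := by
          gcongr ?_ / 4
      _ = 2 * (f1 ^ 2 * v + f2 ^ 2 * u) * s := by ring
  have e1 : 4 * (((f1 + f2) / 2) ^ 2 / s) + a * ((f1 + f2) / 2) ^ 2
      = (4 + a * s) * ((f1 + f2) / 2) ^ 2 / s := by field_simp
  have e2 : 2 * (f1 ^ 2 / u) + 2 * (f2 ^ 2 / v) = 2 * (f1 ^ 2 * v + f2 ^ 2 * u) / (u * v) := by
    field_simp
  rw [e1, e2, div_le_div_iff₀ hs (by positivity)]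
  exact key

lemma avg2_leaf (N : ℕ) (p : ℕ → ℝ) (k : ℕ) : avg2 N p N k = p k := by
  simp [avg2, leafSum, Nat.sub_self]

lemma cubeSum_leaf (N : ℕ) (h : ℕ → ℕ → ℝ) (k : ℕ) : cubeSum N h N k = h N k := by
  simp [cubeSum, Nat.sub_self, Finset.Icc_self]

lemma bellman_base (x c t : ℝ) (hc : 0 ≤ c) (ht : 0 < t) (hM : t * c ≤ 1) :
    t * (c * x ^ 2) ≤ 4 * (x ^ 2 - x ^ 2 / (1 + t * c)) := by
  have h1 : 0 < 1 + t * c := by nlinarith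
  have e : 4 * (x ^ 2 - x ^ 2 / (1 + t * c)) = 4 * (x ^ 2 * (t * c)) / (1 + t * c) := by
    field_simp; ring
  rw [e, le_div_iff₀ h1]
  nlinarith [mul_le_mul_of_nonneg_right hM
    (mul_nonneg (mul_nonneg ht.le hc) (sq_nonneg x))]

lemma bellman (N : ℕ) (g : ℕ → ℝ) (b : ℕ → ℕ → ℝ) (hb : ∀ m j, 0 ≤ b m j)
    (hcar : ∀ n, n ≤ N → ∀ k, k < 2 ^ n → (2 : ℝ) ^ n * cubeSum N b n k ≤ 1) :
    ∀ j n k, n + j = N → k < 2 ^ n →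
      (2 : ℝ) ^ n * cubeSum N (fun m i => b m i * avg2 N g m i ^ 2) n k
        ≤ 4 * (avg2 N (fun l => g l ^ 2) n k
            - avg2 N g n k ^ 2 / (1 + (2 : ℝ) ^ n * cubeSum N b n k)) := by
  intro j
  induction j with
  | zero =>
    intro n k hn hk
    have hnN : n = N := by omega
    subst hnN
    rw [cubeSum_leaf, cubeSum_leaf]
    simp only [avg2_leaf]
    exact bellman_base (g k) (b n k) ((2 : ℝ) ^ n) (hb n k) (by positivity)
      (by have := hcar n le_rfl k hk; rwa [cubeSum_leaf] at this)
  | succ j ih =>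
    intro n k hn hk
    have hnN : n < N := by omega
    have e2 : (2 : ℕ) ^ (n + 1) = 2 * 2 ^ n := by rw [pow_succ]; ring
    have hk1 : 2 * k < 2 ^ (n + 1) := by omega
    have hk2 : 2 * k + 1 < 2 ^ (n + 1) := by omega
    have ih1 := ih (n + 1) (2 * k) (by omega) hk1
    have ih2 := ih (n + 1) (2 * k + 1) (by omega) hk2
    have hc1 : 0 ≤ cubeSum N b (n + 1) (2 * k) := cubeSum_nonneg N b hb _ _
    have hc2 : 0 ≤ cubeSum N b (n + 1) (2 * k + 1) := cubeSum_nonneg N b hb _ _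
    have hM1 : 0 ≤ (2 : ℝ) ^ (n + 1) * cubeSum N b (n + 1) (2 * k) :=
      mul_nonneg (by positivity) hc1
    have hM2 : 0 ≤ (2 : ℝ) ^ (n + 1) * cubeSum N b (n + 1) (2 * k + 1) :=
      mul_nonneg (by positivity) hc2
    have hMtop : ((2 : ℝ) ^ (n + 1) * cubeSum N b (n + 1) (2 * k)
          + (2 : ℝ) ^ (n + 1) * cubeSum N b (n + 1) (2 * k + 1)) / 2
          + (2 : ℝ) ^ n * b n k
        = (2 : ℝ) ^ n * (b n k + cubeSum N b (n + 1) (2 * k)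
            + cubeSum N b (n + 1) (2 * k + 1)) := by
      ring
    have hcarN := hcar n (by omega) k hk
    rw [cubeSum_split N b n k hnN] at hcarN
    have hM : ((2 : ℝ) ^ (n + 1) * cubeSum N b (n + 1) (2 * k)
          + (2 : ℝ) ^ (n + 1) * cubeSum N b (n + 1) (2 * k + 1)) / 2
          + (2 : ℝ) ^ n * b n k ≤ 1 := by rw [hMtop]; exact hcarN
    have key := bellman_key (avg2 N g (n + 1) (2 * k)) (avg2 N g (n + 1) (2 * k + 1))
      ((2 : ℝ) ^ (n + 1) * cubeSum N b (n + 1) (2 * k))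
      ((2 : ℝ) ^ (n + 1) * cubeSum N b (n + 1) (2 * k + 1))
      ((2 : ℝ) ^ n * b n k) hM1 hM2 (mul_nonneg (by positivity) (hb n k)) hM
    rw [hMtop] at key
    have e2r : (2 : ℝ) ^ (n + 1) = 2 * 2 ^ n := by rw [pow_succ]; ring
    rw [e2r] at ih1 ih2 key
    rw [cubeSum_split N _ n k hnN, cubeSum_split N b n k hnN,
      avg2_split N g n k hnN, avg2_split N (fun l => g l ^ 2) n k hnN]
    nlinarith [key, ih1, ih2]

lemma bellman_final (N : ℕ) (g : ℕ → ℝ) (b : ℕ → ℕ → ℝ) (hb : ∀ m j, 0 ≤ b m j)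
    (hcar : ∀ n, n ≤ N → ∀ k, k < 2 ^ n → (2 : ℝ) ^ n * cubeSum N b n k ≤ 1) :
    cubeSum N (fun m i => b m i * avg2 N g m i ^ 2) 0 0
      ≤ 4 * avg2 N (fun l => g l ^ 2) 0 0 := by
  have h := bellman N g b hb hcar N 0 0 (by omega) (by norm_num)
  have hM0 : 0 ≤ cubeSum N b 0 0 := cubeSum_nonneg N b hb 0 0
  have hPhi : 0 ≤ avg2 N g 0 0 ^ 2 / (1 + (2 : ℝ) ^ 0 * cubeSum N b 0 0) := by positivity
  rw [pow_zero] at h hPhi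
  linarith [h, hPhi]

end ScalarCarleson

section MatrixAux

lemma star_mul_self_re (z : ℂ) : (star z * z).re = ‖z‖ ^ 2 := by
  rw [Complex.star_def, ← Complex.normSq_eq_conj_mul_self, Complex.ofReal_re,
    Complex.normSq_eq_norm_sq]

lemma dot_self_re (d : ℕ) (u : Fin d → ℂ) :
    (star u ⬝ᵥ u).re = ∑ i, ‖u i‖ ^ 2 := by
  simp only [dotProduct, Pi.star_apply, Complex.re_sum]
  exact Finset.sum_congr rfl fun i _ => star_mul_self_re _

open scoped MatrixOrder in
lemma psd_exists_conjTranspose_mul_self (d : ℕ) (A : Matrix (Fin d) (Fin d) ℂ)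
    (hA : A.PosSemidef) : ∃ B : Matrix (Fin d) (Fin d) ℂ, A = Bᴴ * B := by
  obtain ⟨X, hX, -, hXA⟩ :=
    CFC.exists_sqrt_of_isSelfAdjoint_of_quasispectrumRestricts hA.isHermitian
      (QuasispectrumRestricts.nnreal_of_nonneg hA.nonneg)
  refine ⟨X, ?_⟩
  have hXh : Xᴴ = X := hX
  rw [hXh, hXA]

lemma quad_le_trace (d : ℕ) (A : Matrix (Fin d) (Fin d) ℂ) (hA : A.PosSemidef)
    (w : Fin d → ℂ) :
    (star w ⬝ᵥ A *ᵥ w).re ≤ A.trace.re * ∑ i, ‖w i‖ ^ 2 := by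
  obtain ⟨B, rfl⟩ := psd_exists_conjTranspose_mul_self d A hA
  have e1 : star w ⬝ᵥ (Bᴴ * B) *ᵥ w = star (B *ᵥ w) ⬝ᵥ (B *ᵥ w) := by
    rw [← Matrix.mulVec_mulVec, Matrix.dotProduct_mulVec, Matrix.vecMul_conjTranspose,
      star_star]
  rw [e1, dot_self_re]
  have e3 : (Bᴴ * B).trace.re = ∑ j, ∑ i, ‖B i j‖ ^ 2 := by
    simp only [Matrix.trace, Matrix.diag, Matrix.mul_apply, Matrix.conjTranspose_apply,
      Complex.re_sum]
    exact Finset.sum_congr rfl fun j _ =>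
      Finset.sum_congr rfl fun i _ => star_mul_self_re _
  rw [e3, Finset.sum_mul]
  have hrow : ∀ i, ‖(B *ᵥ w) i‖ ^ 2 ≤ (∑ j, ‖B i j‖ ^ 2) * ∑ j, ‖w j‖ ^ 2 := by
    intro i
    have h1 : ‖(B *ᵥ w) i‖ ≤ ∑ j, ‖B i j‖ * ‖w j‖ := by
      simpa [Matrix.mulVec, dotProduct] using
        (norm_sum_le Finset.univ (fun j => B i j * w j)).trans
          (le_of_eq (Finset.sum_congr rfl fun j _ => norm_mul _ _))
    calc ‖(B *ᵥ w) i‖ ^ 2 ≤ (∑ j, ‖B i j‖ * ‖w j‖) ^ 2 := by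
          exact pow_le_pow_left₀ (norm_nonneg _) h1 2
      _ ≤ (∑ j, ‖B i j‖ ^ 2) * ∑ j, ‖w j‖ ^ 2 :=
          Finset.sum_mul_sq_le_sq_mul_sq _ _ _
  calc ∑ i, ‖(B *ᵥ w) i‖ ^ 2 ≤ ∑ i, (∑ j, ‖B i j‖ ^ 2) * ∑ j, ‖w j‖ ^ 2 :=
        Finset.sum_le_sum fun i _ => hrow i
    _ = ∑ j, ∑ i, (‖B i j‖ ^ 2) * ∑ j', ‖w j'‖ ^ 2 := by
        rw [Finset.sum_comm]
        exact Finset.sum_congr rfl fun i _ => by rw [Finset.sum_mul]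
    _ = ∑ j, (∑ i, ‖B i j‖ ^ 2) * ∑ j', ‖w j'‖ ^ 2 := by
        exact Finset.sum_congr rfl fun j _ => by rw [Finset.sum_mul]

lemma trace_re_nonneg (d : ℕ) (A : Matrix (Fin d) (Fin d) ℂ) (hA : A.PosSemidef) :
    0 ≤ A.trace.re := by
  obtain ⟨B, rfl⟩ := psd_exists_conjTranspose_mul_self d A hA
  have e3 : (Bᴴ * B).trace.re = ∑ j, ∑ i, ‖B i j‖ ^ 2 := by
    simp only [Matrix.trace, Matrix.diag, Matrix.mul_apply, Matrix.conjTranspose_apply,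
      Complex.re_sum]
    exact Finset.sum_congr rfl fun j _ =>
      Finset.sum_congr rfl fun i _ => star_mul_self_re _
  rw [e3]
  positivity

lemma euc_norm (d : ℕ) (v : Fin d → ℂ) :
    ‖(WithLp.linearEquiv 2 ℂ (Fin d → ℂ)).symm v‖ = Real.sqrt (∑ i, ‖v i‖ ^ 2) := by
  rw [EuclideanSpace.norm_eq]
  rfl

lemma euc_norm_sq (d : ℕ) (v : Fin d → ℂ) :
    ∑ i, ‖v i‖ ^ 2 = ‖(WithLp.linearEquiv 2 ℂ (Fin d → ℂ)).symm v‖ ^ 2 := by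
  rw [euc_norm, Real.sq_sqrt]
  positivity

lemma avg_norm_sq_le (d : ℕ) (c : ℝ) (hc : 0 ≤ c) (s : Finset ℕ) (f : ℕ → Fin d → ℂ) :
    ∑ i, ‖(c • ∑ l ∈ s, f l) i‖ ^ 2
      ≤ (c * ∑ l ∈ s, Real.sqrt (∑ i, ‖f l i‖ ^ 2)) ^ 2 := by
  set L := (WithLp.linearEquiv 2 ℂ (Fin d → ℂ)).symm with hL
  rw [euc_norm_sq]
  have hsmul : (c • ∑ l ∈ s, f l) = ((c : ℂ) • ∑ l ∈ s, f l) := by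
    ext i; simp [Complex.real_smul]
  rw [hsmul, _root_.map_smul, map_sum, norm_smul]
  have h1 : ‖∑ l ∈ s, L (f l)‖ ≤ ∑ l ∈ s, Real.sqrt (∑ i, ‖f l i‖ ^ 2) := by
    refine (norm_sum_le _ _).trans (le_of_eq (Finset.sum_congr rfl fun l _ => ?_))
    exact euc_norm d (f l)
  have h2 : ‖(c : ℂ)‖ = c := by simp [hc, abs_of_nonneg]
  rw [h2]
  have hn : 0 ≤ ‖∑ l ∈ s, L (f l)‖ := norm_nonneg _
  exact pow_le_pow_left₀ (by positivity) (mul_le_mul_of_nonneg_left h1 hc) 2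

lemma carleson_trace (d : ℕ) (C t : ℝ) (S : Matrix (Fin d) (Fin d) ℂ)
    (h : (C • (1 : Matrix (Fin d) (Fin d) ℂ) - t • S).PosSemidef) :
    t * S.trace.re ≤ C * d := by
  have h0 := trace_re_nonneg d _ h
  rw [Matrix.trace_sub, Matrix.trace_smul, Matrix.trace_smul, Matrix.trace_one] at h0
  simp only [Complex.real_smul, Complex.sub_re, Complex.mul_re, Complex.ofReal_re,
    Complex.ofReal_im, Complex.natCast_re, Complex.natCast_im] at h0
  simp only [Fintype.card_fin] at h0
  linarith

end MatrixAux

/-- finite dyadic version: unweighted matrix Carleson embedding: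
if `(1/|K|) Σ_{Q ⊆ K} A_Q ≤ C·1` in the Loewner order for all dyadic `K`, then
`Σ_Q ⟨A_Q ⟨f⟩_Q, ⟨f⟩_Q⟩ ≤ C' d ‖f‖²_{L²}`. -/
theorem matrix_carleson_embedding (d : ℕ) :
    ∀ C : ℝ, 0 ≤ C → ∃ C' : ℝ,
    ∀ (N : ℕ) (A : ℕ → ℕ → Matrix (Fin d) (Fin d) ℂ),
      (∀ n k, (A n k).PosSemidef) →
    (∀ n ≤ N, ∀ k < 2 ^ n,
      (C • (1 : Matrix (Fin d) (Fin d) ℂ) -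
        (2 : ℝ) ^ n • ∑ m ∈ Finset.Icc n N, ∑ l ∈ Finset.range (2 ^ (m - n)),
          A m (k * 2 ^ (m - n) + l)).PosSemidef) →
    ∀ f : ℕ → Fin d → ℂ,
      ∑ n ∈ Finset.range (N + 1), ∑ k ∈ Finset.range (2 ^ n),
          (star (vecAvg N f n k) ⬝ᵥ (A n k).mulVec (vecAvg N f n k)).re ≤
        C' * d *
          (((2 : ℝ) ^ N)⁻¹ * ∑ l ∈ Finset.range (2 ^ N), ∑ i, ‖f l i‖ ^ 2) := by
  intro C hC
  refine ⟨4 * (C + 1), ?_⟩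
  intro N A hA hcar f
  by_cases hd : d = 0
  · subst hd
    simp [dotProduct]
  · have hd1 : 1 ≤ (d : ℝ) := by
      exact_mod_cast Nat.one_le_iff_ne_zero.mpr hd
    set c : ℝ := C * d + 1 with hc_def
    have hcpos : 0 < c := by positivity
    set g : ℕ → ℝ := fun l => Real.sqrt (∑ i, ‖f l i‖ ^ 2) with hg_def
    set b : ℕ → ℕ → ℝ := fun m j => (A m j).trace.re / c with hb_def
    have hb : ∀ m j, 0 ≤ b m j := fun m j =>
      div_nonneg (trace_re_nonneg d _ (hA m j)) hcpos.le
    have htr_eq : ∀ n k, (∑ m ∈ Finset.Icc n N, ∑ l ∈ Finset.range (2 ^ (m - n)),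
          A m (k * 2 ^ (m - n) + l)).trace.re
        = cubeSum N (fun m j => (A m j).trace.re) n k := by
      intro n k
      simp [Matrix.trace_sum, Complex.re_sum, cubeSum]
    have hbcar : ∀ n, n ≤ N → ∀ k, k < 2 ^ n → (2 : ℝ) ^ n * cubeSum N b n k ≤ 1 := by
      intro n hn k hk
      have h1 := carleson_trace d C ((2 : ℝ) ^ n) _ (hcar n hn k hk)
      rw [htr_eq n k] at h1
      have h3 : cubeSum N b n k = cubeSum N (fun m j => (A m j).trace.re) n k / c := by
        simp [cubeSum, hb_def, Finset.sum_div]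
      rw [h3, ← mul_div_assoc, div_le_one hcpos]
      calc (2 : ℝ) ^ n * cubeSum N (fun m j => (A m j).trace.re) n k ≤ C * d := h1
        _ ≤ c := by rw [hc_def]; linarith
    have hterm : ∀ n k, (star (vecAvg N f n k) ⬝ᵥ (A n k).mulVec (vecAvg N f n k)).re
        ≤ c * (b n k * avg2 N g n k ^ 2) := by
      intro n k
      have q := quad_le_trace d (A n k) (hA n k) (vecAvg N f n k)
      have w : ∑ i, ‖vecAvg N f n k i‖ ^ 2 ≤ avg2 N g n k ^ 2 := by
        have h := avg_norm_sq_le d (((2 : ℝ) ^ (N - n))⁻¹) (by positivity)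
          (Finset.range (2 ^ (N - n))) (fun l => f (k * 2 ^ (N - n) + l))
        simpa [vecAvg, avg2, leafSum, hg_def] using h
      have htr : 0 ≤ (A n k).trace.re := trace_re_nonneg d _ (hA n k)
      calc (star (vecAvg N f n k) ⬝ᵥ (A n k).mulVec (vecAvg N f n k)).re
          ≤ (A n k).trace.re * ∑ i, ‖vecAvg N f n k i‖ ^ 2 := q
        _ ≤ (A n k).trace.re * avg2 N g n k ^ 2 := mul_le_mul_of_nonneg_left w htr
        _ = c * (b n k * avg2 N g n k ^ 2) := by
            simp only [hb_def]
            field_simp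
    have e0 : cubeSum N (fun m i => b m i * avg2 N g m i ^ 2) 0 0
        = ∑ n ∈ Finset.range (N + 1), ∑ k ∈ Finset.range (2 ^ n),
            b n k * avg2 N g n k ^ 2 := by
      unfold cubeSum
      rw [show Finset.Icc 0 N = Finset.range (N + 1) by
        rw [Finset.range_eq_Ico, Finset.Ico_add_one_right_eq_Icc]]
      exact Finset.sum_congr rfl fun m _ => Finset.sum_congr rfl fun l _ => by
        simp
    have hsum : ∑ n ∈ Finset.range (N + 1), ∑ k ∈ Finset.range (2 ^ n),
          (star (vecAvg N f n k) ⬝ᵥ (A n k).mulVec (vecAvg N f n k)).re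
        ≤ c * cubeSum N (fun m i => b m i * avg2 N g m i ^ 2) 0 0 := by
      rw [e0, Finset.mul_sum]
      refine Finset.sum_le_sum fun n _ => ?_
      rw [Finset.mul_sum]
      exact Finset.sum_le_sum fun k _ => hterm n k
    have hbell := bellman_final N g b hb hbcar
    have hg2 : avg2 N (fun l => g l ^ 2) 0 0
        = ((2 : ℝ) ^ N)⁻¹ * ∑ l ∈ Finset.range (2 ^ N), ∑ i, ‖f l i‖ ^ 2 := by
      unfold avg2 leafSum
      simp only [Nat.sub_zero]
      congr 1
      refine Finset.sum_congr rfl fun l _ => ?_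
      simp only [hg_def, zero_mul, zero_add]
      rw [Real.sq_sqrt (by positivity)]
    have hX : 0 ≤ ((2 : ℝ) ^ N)⁻¹ * ∑ l ∈ Finset.range (2 ^ N), ∑ i, ‖f l i‖ ^ 2 := by
      positivity
    have hcd : c ≤ (C + 1) * d := by
      rw [hc_def]
      nlinarith
    calc ∑ n ∈ Finset.range (N + 1), ∑ k ∈ Finset.range (2 ^ n),
          (star (vecAvg N f n k) ⬝ᵥ (A n k).mulVec (vecAvg N f n k)).re
        ≤ c * cubeSum N (fun m i => b m i * avg2 N g m i ^ 2) 0 0 := hsum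
      _ ≤ c * (4 * avg2 N (fun l => g l ^ 2) 0 0) :=
          mul_le_mul_of_nonneg_left hbell hcpos.le
      _ = 4 * c * (((2 : ℝ) ^ N)⁻¹ * ∑ l ∈ Finset.range (2 ^ N), ∑ i, ‖f l i‖ ^ 2) := by
          rw [hg2]; ring
      _ ≤ 4 * ((C + 1) * d) *
            (((2 : ℝ) ^ N)⁻¹ * ∑ l ∈ Finset.range (2 ^ N), ∑ i, ‖f l i‖ ^ 2) := by
          have h4 : 4 * c ≤ 4 * ((C + 1) * d) := by linarith
          exact mul_le_mul_of_nonneg_right h4 hX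
      _ = 4 * (C + 1) * d *
            (((2 : ℝ) ^ N)⁻¹ * ∑ l ∈ Finset.range (2 ^ N), ∑ i, ‖f l i‖ ^ 2) := by
          ring
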